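/- Let n ≥ 2, let a₀, a₁, …, aₙ, b : ℝ → ℝ with a₀(t) ≠ 0 for all t, and define f : ℝ × ℝⁿ → ℝ by f(t,x) = b(t)/a₀(t) − Σ_{j=1}^{n} (a_{n−j+1}(t)/a₀(t))·xʲ (so that the first-order system associated to the non-homogeneous linear ODE a₀ y⁽ⁿ⁾ + a₁ y⁽ⁿ⁻¹⁾ + … + a_{n−1} y' + aₙ y = b has Xⁱ(t,x) = xⁱ⁺¹ for i ≤ n−1 and Xⁿ(t,x) = f(t,x)). Then the jet geometric Yang–Mills energy produced by this ODE satisfies, for all (t,x), EYM(t,x) = (1/4)[ n − 1 + 2·a₂(t)/a₀(t) + Σ_{j=2}^{n} a_j(t)²/a₀(t)² ]; in particular it does not depend on x nor on the non-homogeneity term b(t). -/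

import Mathlib

/-- Partial derivative of `g : ℝⁿ → ℝ` at `x` in the `j`-th coordinate direction. -/
noncomputable def pd {n : ℕ} (g : (Fin n → ℝ) → ℝ) (x : Fin n → ℝ) (j : Fin n) : ℝ :=
  fderiv ℝ g x (Pi.single j 1)

/-- The electromagnetic matrix produced by the first-order ODE system
`dxⁱ/dt = Xⁱ(t,x)`: `F_{ij}(t,x) = (1/2)(∂Xⁱ/∂xʲ - ∂Xʲ/∂xⁱ)`. -/
noncomputable def emF {n : ℕ} (X : ℝ → (Fin n → ℝ) → Fin n → ℝ)
    (t : ℝ) (x : Fin n → ℝ) (i j : Fin n) : ℝ :=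
  (1 / 2) * (pd (fun y => X t y i) x j - pd (fun y => X t y j) x i)

/-- The first-order system associated to the superior order ODE
`y⁽ⁿ⁾ = f(t, y, y', …, y⁽ⁿ⁻¹⁾)` via `x¹ = y, …, xⁿ = y⁽ⁿ⁻¹⁾` (0-based indexing):
`Xⁱ(t,x) = xⁱ⁺¹` for `i < n-1` and `Xⁿ⁻¹(t,x) = f(t,x)`. -/
def sodeX (n : ℕ) (f : ℝ → (Fin n → ℝ) → ℝ) : ℝ → (Fin n → ℝ) → Fin n → ℝ :=
  fun t x i => if h : (i : ℕ) + 1 < n then x ⟨(i : ℕ) + 1, h⟩ else f t x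

/-!
The Jacobian in `x` of the reduced system is the companion matrix (ones on the superdiagonal,
last row `-aₙ/a₀, …, -a₁/a₀`), which involves neither `x` nor `b` because `f` is affine in `x`.
Above the diagonal its antisymmetric part `F` is `1/2` on the superdiagonal plus `aₙ₋ᵢ/(2a₀)` in
the last column. The two meet only at `(n-2, n-1)`, where squaring `1/2 + a₂/(2a₀)` gives the
cross term; otherwise the `n - 1` superdiagonal entries contribute `(n - 1)/4` and the last
column `∑ⱼ aⱼ²/(4a₀²)`.
-/

open Finset

lemma pd_apply {n : ℕ} (k j : Fin n) (x : Fin n → ℝ) :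
    pd (fun y => y k) x j = if j = k then 1 else 0 := by
  simp [pd, (hasFDerivAt_apply (𝕜 := ℝ) k x).fderiv, Pi.single_apply, eq_comm]

lemma pd_const_sub_sum_mul {n : ℕ} (C : ℝ) (c : Fin n → ℝ) (x : Fin n → ℝ) (i : Fin n) :
    pd (fun y => C - ∑ j, c j * y j) x i = -c i := by
  have hsum : HasFDerivAt (fun y : Fin n → ℝ => ∑ j, c j * y j)
      (∑ j, c j • ContinuousLinearMap.proj j) x :=
    HasFDerivAt.fun_sum fun j _ => (hasFDerivAt_apply (𝕜 := ℝ) j x).const_mul (c j)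
  simp [pd, (hsum.const_sub C).fderiv, Pi.single_apply]

lemma pd_sodeX_of_succ_lt {n : ℕ} (f : ℝ → (Fin n → ℝ) → ℝ) (t : ℝ) (x : Fin n → ℝ)
    {i : Fin n} (hi : (i : ℕ) + 1 < n) (j : Fin n) :
    pd (fun y => sodeX n f t y i) x j = if (j : ℕ) = i + 1 then 1 else 0 := by
  simp only [sodeX, dif_pos hi, pd_apply, Fin.ext_iff]

lemma pd_sodeX_of_succ_eq {n : ℕ} (f : ℝ → (Fin n → ℝ) → ℝ) (t : ℝ) (x : Fin n → ℝ)
    {i : Fin n} (hi : (i : ℕ) + 1 = n) (j : Fin n) :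
    pd (fun y => sodeX n f t y i) x j = pd (f t) x j := by
  simp only [sodeX, dif_neg hi.not_lt]

lemma emF_sodeX_of_lt {n : ℕ} (f : ℝ → (Fin n → ℝ) → ℝ) (t : ℝ) (x : Fin n → ℝ)
    {i j : Fin n} (hij : i < j) :
    emF (sodeX n f) t x i j
      = 1 / 2 * ((if (j : ℕ) = i + 1 then 1 else 0)
          - if (j : ℕ) + 1 = n then pd (f t) x i else 0) := by
  have hij : (i : ℕ) < j := hij
  rw [emF, pd_sodeX_of_succ_lt f t x (by omega)]
  by_cases hj : (j : ℕ) + 1 = n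
  · rw [pd_sodeX_of_succ_eq f t x hj, if_pos hj]
  · rw [pd_sodeX_of_succ_lt f t x (by omega), if_neg hj,
      if_neg (show ¬ (i : ℕ) = j + 1 by omega)]

lemma sum_filter_fin_lt_eq_sum_range {M : Type*} [AddCommMonoid M] (n : ℕ) (g : ℕ → ℕ → M) :
    ∑ p ∈ univ.filter (fun p : Fin n × Fin n => p.1 < p.2), g p.1 p.2
      = ∑ j ∈ range n, ∑ i ∈ range j, g i j := by
  rw [sum_filter, Fintype.sum_prod_type_right, ← Fin.sum_univ_eq_sum_range]
  refine sum_congr rfl fun j _ => ?_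
  simp only [Fin.lt_def]
  rw [Fin.sum_univ_eq_sum_range (fun i => if i < (j : ℕ) then g i j else 0), ← sum_filter]
  congr 1
  ext i
  simp only [mem_filter, mem_range]
  omega

lemma sum_range_sum_range_companion_sq (n : ℕ) (hn : 2 ≤ n) (c : ℕ → ℝ) :
    ∑ j ∈ range n, ∑ i ∈ range j,
        (1 / 2 * ((if j = i + 1 then 1 else 0) + if j + 1 = n then c i else 0)) ^ 2
      = 1 / 4 * ((n : ℝ) - 1 + 2 * c (n - 2) + ∑ i ∈ range (n - 1), c i ^ 2) := by
  obtain ⟨m, rfl⟩ := Nat.exists_eq_add_of_le' hn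
  have upper : ∀ j ∈ range (m + 1), ∑ i ∈ range j,
      (1 / 2 * ((if j = i + 1 then 1 else 0) + if j + 1 = m + 2 then c i else 0)) ^ 2
        = if j = 0 then 0 else 1 / 4 := by
    intro j hj
    rcases j with _ | k
    · simp
    · have hk : k ≠ m := by rw [mem_range] at hj; omega
      rw [sum_range_succ, sum_eq_zero fun i hi => by simp [(mem_range.1 hi).ne', hk]]
      norm_num [hk]
  have last : ∑ i ∈ range (m + 1),
      (1 / 2 * ((if m + 1 = i + 1 then 1 else 0) + if m + 1 + 1 = m + 2 then c i else 0)) ^ 2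
        = ∑ i ∈ range m, 1 / 4 * c i ^ 2 + (1 / 2 * (1 + c m)) ^ 2 := by
    rw [sum_range_succ]
    congr 1
    · refine sum_congr rfl fun i hi => ?_
      rw [if_neg (show m + 1 ≠ i + 1 by rw [mem_range] at hi; omega), if_pos rfl]
      ring
    · simp
  rw [sum_range_succ, sum_congr rfl upper, last, sum_range_succ', Nat.add_sub_cancel,
    Nat.add_succ_sub_one, sum_range_succ (fun i => c i ^ 2), ← mul_sum]
  simp only [Nat.add_one_ne_zero, if_false, if_true, sum_const, card_range, nsmul_eq_mul, add_zero]
  push_cast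
  ring

lemma sum_range_sub_eq_sum_fin_add_two {M : Type*} [AddCommMonoid M] (n : ℕ)
    (v : Fin (n + 1) → M) :
    ∑ i ∈ range (n - 1), v ⟨n - i, by omega⟩ = ∑ j : Fin (n - 1), v ⟨j + 2, by omega⟩ := by
  rw [← Fin.sum_univ_eq_sum_range (fun i => v ⟨n - i, by omega⟩), ← Equiv.sum_comp Fin.revPerm]
  refine sum_congr rfl fun j _ => ?_
  simp only [Fin.revPerm_apply, Fin.val_rev]
  congr 2
  omega

/-- for the non-homogeneous linear ODE of order `n`
`a₀ y⁽ⁿ⁾ + a₁ y⁽ⁿ⁻¹⁾ + … + a_{n-1} y' + aₙ y = b` with `a₀(t) ≠ 0`, reduced to a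
first-order system via `f(t,x) = b/a₀ - ∑_{j=1}^{n} (a_{n-j+1}/a₀) xʲ`
(the 1-based index `j` corresponds to the 0-based index `j - 1`, so the 0-based
coefficient of `xʲ` is `a_{n-j}/a₀`), the jet geometric Yang–Mills energy is
`(1/4)[n - 1 + 2 a₂(t)/a₀(t) + ∑_{j=2}^{n} a_j(t)²/a₀(t)²]`; in particular it
depends neither on `x` nor on the non-homogeneity term `b`. -/
theorem yang_mills_energy_of_nonhomogeneous_linear_superior_order_ode
    (n : ℕ) (hn : 2 ≤ n)
    (a : Fin (n + 1) → ℝ → ℝ) (b : ℝ → ℝ) :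
    ∀ (t : ℝ) (x : Fin n → ℝ),
      ∑ p ∈ Finset.univ.filter (fun p : Fin n × Fin n => p.1 < p.2),
          emF (sodeX n (fun t x => b t / a 0 t
              - ∑ j : Fin n, (a ⟨n - (j : ℕ), by omega⟩ t / a 0 t) * x j))
            t x p.1 p.2 ^ 2
        = (1 / 4) * ((n : ℝ) - 1 + 2 * (a ⟨2, by omega⟩ t / a 0 t)
            + ∑ j : Fin (n - 1),
                (a ⟨(j : ℕ) + 2, by omega⟩ t) ^ 2 / (a 0 t) ^ 2) := by
  intro t x
  set c : ℕ → ℝ := fun k => a ⟨n - k, by omega⟩ t / a 0 t with hc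
  have hF : ∀ p ∈ univ.filter (fun p : Fin n × Fin n => p.1 < p.2),
      emF (sodeX n (fun t x => b t / a 0 t
          - ∑ j : Fin n, (a ⟨n - (j : ℕ), by omega⟩ t / a 0 t) * x j)) t x p.1 p.2 ^ 2
        = (1 / 2 * ((if (p.2 : ℕ) = p.1 + 1 then 1 else 0)
            + if (p.2 : ℕ) + 1 = n then c p.1 else 0)) ^ 2 := by
    intro p hp
    rw [emF_sodeX_of_lt _ t x (mem_filter.1 hp).2, pd_const_sub_sum_mul]
    split_ifs <;> ring
  have hc2 : c (n - 2) = a ⟨2, by omega⟩ t / a 0 t := by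
    simp only [hc, show n - (n - 2) = 2 by omega]
  have hsq : ∑ i ∈ range (n - 1), c i ^ 2
      = ∑ j : Fin (n - 1), (a ⟨(j : ℕ) + 2, by omega⟩ t) ^ 2 / (a 0 t) ^ 2 := by
    simp only [hc, div_pow]
    exact sum_range_sub_eq_sum_fin_add_two n (fun k => a k t ^ 2 / a 0 t ^ 2)
  rw [sum_congr rfl hF, sum_filter_fin_lt_eq_sum_range n fun i j =>
      (1 / 2 * ((if j = i + 1 then 1 else 0) + if j + 1 = n then c i else 0)) ^ 2,
    sum_range_sum_range_companion_sq n hn c, hc2, hsq]
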